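/- Let K be a d-simplex and F, F′ two distinct faces of K. Let ψ_F = (2d−1)!/((d−1)!·|F|) · ∏_{z ∈ V_F} λ_z where V_F is the set of vertices of F and λ_z the barycentric coordinate associated with vertex z. Then ∫_{F′} ψ_F dS = 0. -/

import Mathlib

open MeasureTheory

theorem AffineBasis.coord_eq_zero_of_mem_convexHull {ι 𝕜 E : Type*} [Ring 𝕜] [PartialOrder 𝕜]
    [AddCommGroup E] [Module 𝕜 E] (b : AffineBasis ι 𝕜 E) {s : Set ι} {i : ι}
    (hi : i ∉ s) {x : E} (hx : x ∈ convexHull 𝕜 (b '' s)) : b.coord i x = 0 := by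
  refine convexHull_min ?_ ((convex_singleton 0).affine_preimage (b.coord i)) hx
  rintro _ ⟨k, hk, rfl⟩
  exact b.coord_apply_ne (ne_of_mem_of_not_mem hk hi).symm

theorem face_bubble_vanishes_on_other_faces_general
    (d : ℕ)
    (b : AffineBasis (Fin (d + 1)) ℝ (EuclideanSpace ℝ (Fin d)))
    (j j' : Fin (d + 1)) (hjj' : j ≠ j')
    (F F' : Set (EuclideanSpace ℝ (Fin d)))
    (hF' : F' = convexHull ℝ ((fun i => b i) '' {i | i ≠ j'}))
    (ψ : EuclideanSpace ℝ (Fin d) → ℝ)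
    (hψ : ∀ x, ψ x = ((2 * d - 1).factorial : ℝ) /
        (((d - 1).factorial : ℝ) * (μH[(d : ℝ) - 1] F).toReal) *
        ∏ i ∈ Finset.univ.filter (· ≠ j), b.coord i x) :
    ∫ x in F', ψ x ∂(μH[(d : ℝ) - 1]) = 0 := by
  refine setIntegral_eq_zero_of_forall_eq_zero fun x hx => ?_
  subst hF'
  have hj' : j' ∈ Finset.univ.filter (· ≠ j) := by simp [hjj'.symm]
  have hcoord : b.coord j' x = 0 := b.coord_eq_zero_of_mem_convexHull (by simp) hx
  rw [hψ, Finset.prod_eq_zero hj' hcoord, mul_zero]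

/-- The face bubble associated with a face `F` of a `d`-simplex `K` integrates to
zero over every other face `F'` of `K`. The simplex has vertices `b i`,
`i : Fin (d+1)`, with barycentric coordinates `b.coord i`; the face opposite
vertex `j` is the convex hull of the remaining vertices. `F` is the face opposite
`j`, `F'` the face opposite `j' ≠ j`, and
`ψ_F = (2d-1)!/((d-1)! |F|) ∏_{i ≠ j} λ_i`. -/
theorem face_bubble_vanishes_on_other_faces
    (d : ℕ) (hd : 1 ≤ d)
    (b : AffineBasis (Fin (d + 1)) ℝ (EuclideanSpace ℝ (Fin d)))
    (j j' : Fin (d + 1)) (hjj' : j ≠ j')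
    (F F' : Set (EuclideanSpace ℝ (Fin d)))
    (hF : F = convexHull ℝ ((fun i => b i) '' {i | i ≠ j}))
    (hF' : F' = convexHull ℝ ((fun i => b i) '' {i | i ≠ j'}))
    (ψ : EuclideanSpace ℝ (Fin d) → ℝ)
    (hψ : ∀ x, ψ x = ((2 * d - 1).factorial : ℝ) /
        (((d - 1).factorial : ℝ) * (μH[(d : ℝ) - 1] F).toReal) *
        ∏ i ∈ Finset.univ.filter (· ≠ j), b.coord i x) :
    ∫ x in F', ψ x ∂(μH[(d : ℝ) - 1]) = 0 :=
  face_bubble_vanishes_on_other_faces_general d b j j' hjj' F F' hF' ψ hψ
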